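/- Let j = (j_0,…,j_l) ∈ Σ and set A_1 = ⋃_{0≤r≤l} ⋃_{j_{r−1} < i < j_r} closure(I(j_0,…,j_{r−1},i)) (where for r = 0 the inner union is over all i < j_0), and A_2 = ⋃_{k>l} ⋃_{j_l < i_{l+1} < ⋯ < i_k} closure(I(j_0,…,j_l,i_{l+1},…,i_k)). Then ⋃_{i ≺ j} closure(I(i)) = A_1 ∪ A_2 = A_1 ∪ J(j); in particular ⋃_{i ≺ j} closure(I(i)) is a closed subset of K. -/

import Mathlib

open Set TopologicalSpace

/-- A family of subsets is isolated if each member is disjoint from the closure of the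
union of the other members. -/
def IsIsolatedFamily {K : Type*} [TopologicalSpace K] (ℐ : Set (Set K)) : Prop :=
  ∀ N ∈ ℐ, N ∩ closure (⋃₀ (ℐ \ {N})) = ∅

/-- A regular isolated family: `N = closure N \ closure (⋃ (ℐ \ {N}))` for each member. -/
def IsRegularIsolatedFamily {K : Type*} [TopologicalSpace K] (ℐ : Set (Set K)) : Prop :=
  IsIsolatedFamily ℐ ∧ ∀ N ∈ ℐ, N = closure N \ closure (⋃₀ (ℐ \ {N}))

/-- `Jof F = closure (⋃ F) \ ⋃ F` for a family of sets `F`. -/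
def Jof {K : Type*} [TopologicalSpace K] (F : Set (Set K)) : Set K :=
  closure (⋃₀ F) \ ⋃₀ F

/-- Auxiliary recursion defining the families `𝓘(i_0,…,i_k)`, with the sequence of
indices given in *reverse* order (most recent index first):
`𝓘(i_0,…,i_k,i_{k+1}) = {N ∩ J(i_0,…,i_k) : N ∈ 𝓘(i_{k+1})}`. -/
def famRev {K : Type*} [TopologicalSpace K] (𝓘 : ℕ → Set (Set K)) : List ℕ → Set (Set K)
  | [] => ∅
  | [i] => 𝓘 i
  | i :: j :: l => (fun N => N ∩ Jof (famRev 𝓘 (j :: l))) '' 𝓘 i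

/-- The family `𝓘(i_0,…,i_k)`, the index sequence given in natural order. -/
def fam {K : Type*} [TopologicalSpace K] (𝓘 : ℕ → Set (Set K)) (l : List ℕ) :
    Set (Set K) :=
  famRev 𝓘 l.reverse

/-- The set `I(i_0,…,i_k) = ⋃ 𝓘(i_0,…,i_k)`. -/
def ISet {K : Type*} [TopologicalSpace K] (𝓘 : ℕ → Set (Set K)) (l : List ℕ) : Set K :=
  ⋃₀ fam 𝓘 l

/-- The set `J(i_0,…,i_k) = closure I(i_0,…,i_k) \ I(i_0,…,i_k)`. -/
def JSet {K : Type*} [TopologicalSpace K] (𝓘 : ℕ → Set (Set K)) (l : List ℕ) : Set K :=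
  closure (ISet 𝓘 l) \ ISet 𝓘 l

/-- Membership in `Σ`: nonempty strictly increasing finite sequences of naturals. -/
def SigmaMem (l : List ℕ) : Prop :=
  l ≠ [] ∧ l.Chain' (· < ·)

/-- The total order `≺` on finite sequences: `a ≺ b` iff either they first differ at a
position `r` where `a` is smaller, or `b` is a proper initial segment of `a`. -/
def SLt (a b : List ℕ) : Prop :=
  (∃ (r : ℕ) (x y : ℕ), (∀ s < r, a[s]? = b[s]?) ∧ a[r]? = some x ∧ b[r]? = some y ∧ x < y)
  ∨ (b <+: a ∧ b ≠ a)

/-! The union of a regular isolated family is locally closed: a point of a member `N` has the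
neighbourhood `(closure ⋃ (ℐ \ {N}))ᶜ`, on which the closure of the union reduces to
`closure N`. Inductively every `I(i)` is locally closed, i.e. every `J(i)` is closed, so
`closure I(i, e) ⊆ J(i)` for nonempty `e`. The `≺`-predecessors of `j` that branch off to the
left of `j` thus give the finitely many closed sets of `A₁`, and the extensions of `j` give
`A₂ ⊆ J(j)`. Conversely a point of `J(j)` lies in some `⋃ 𝓘(i)`; comparing `i` with the entries
of `j`, it lies in `I(j, i)` when `i > j_l`, and otherwise in `I(j_0, …, j_{r-1}, i)` with
`j_{r-1} < i < j_r`, because `i = j_r` would put it in `I(j_0, …, j_r) ∩ J(j_0, …, j_r) = ∅`. -/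

lemma IsRegularIsolatedFamily.isLocallyClosed_sUnion {K : Type*} [TopologicalSpace K]
    {F : Set (Set K)} (hF : IsRegularIsolatedFamily F) : IsLocallyClosed (⋃₀ F) := by
  refine ((isLocallyClosed_tfae _).out 0 3).mpr ?_
  rintro x ⟨N, hN, hxN⟩
  have hN_eq : N = closure N \ closure (⋃₀ (F \ {N})) := hF.2 N hN
  refine ⟨(closure (⋃₀ (F \ {N})))ᶜ, (hN_eq.subset hxN).2, isClosed_closure.isOpen_compl, ?_⟩
  rintro y ⟨hyR, hy⟩
  rw [← insert_eq_of_mem hN, ← insert_sdiff_singleton, sUnion_insert, closure_union] at hy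
  refine ⟨N, hN, ?_⟩
  rw [hN_eq]
  exact ⟨hy.resolve_right hyR, hyR⟩

lemma IsLocallyClosed.isClosed_closure_diff {X : Type*} [TopologicalSpace X] {s : Set X}
    (hs : IsLocallyClosed s) : IsClosed (closure s \ s) :=
  isOpen_compl_iff.mp hs.isOpen_coborder

section ISet

variable {K : Type*} [TopologicalSpace K] (𝓘 : ℕ → Set (Set K))

lemma ISet_nil : ISet 𝓘 [] = ∅ := sUnion_empty

lemma ISet_append_singleton {l : List ℕ} (hl : l ≠ []) (i : ℕ) :
    ISet 𝓘 (l ++ [i]) = ⋃₀ 𝓘 i ∩ JSet 𝓘 l := by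
  obtain ⟨j, t, ht⟩ := List.exists_cons_of_ne_nil (List.reverse_ne_nil_iff.mpr hl)
  have hJ : JSet 𝓘 l = Jof (famRev 𝓘 (j :: t)) := by
    rw [← ht]; rfl
  rw [hJ, ISet, fam, List.reverse_append, ht, List.reverse_singleton, List.singleton_append,
    famRev, sUnion_image, sUnion_eq_biUnion, iUnion₂_inter]

variable {𝓘} (hreg : ∀ i : ℕ, IsRegularIsolatedFamily (𝓘 i))
include hreg

lemma isLocallyClosed_ISet (l : List ℕ) : IsLocallyClosed (ISet 𝓘 l) := by
  induction l using List.reverseRecOn with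
  | nil => exact ISet_nil 𝓘 ▸ isClosed_empty.isLocallyClosed
  | append_singleton l i ih =>
    rcases eq_or_ne l [] with rfl | hl
    · exact (hreg i).isLocallyClosed_sUnion
    · rw [ISet_append_singleton 𝓘 hl]
      exact (hreg i).isLocallyClosed_sUnion.inter ih.isClosed_closure_diff.isLocallyClosed

lemma isClosed_JSet (l : List ℕ) : IsClosed (JSet 𝓘 l) :=
  (isLocallyClosed_ISet hreg l).isClosed_closure_diff

lemma closure_ISet_append_subset_JSet {l : List ℕ} (hl : l ≠ []) {e : List ℕ} (he : e ≠ []) :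
    closure (ISet 𝓘 (l ++ e)) ⊆ JSet 𝓘 l := by
  induction e using List.reverseRecOn with
  | nil => exact absurd rfl he
  | append_singleton e i ih =>
    have hstep : ∀ m : List ℕ, m ≠ [] → closure (ISet 𝓘 (m ++ [i])) ⊆ JSet 𝓘 m := fun m hm =>
      closure_minimal (ISet_append_singleton 𝓘 hm i ▸ inter_subset_right) (isClosed_JSet hreg m)
    rcases eq_or_ne e [] with rfl | he'
    · exact hstep l hl
    · rw [← List.append_assoc]
      exact (hstep _ (List.append_ne_nil_of_left_ne_nil hl e)).trans
        (sdiff_subset.trans (ih he'))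

lemma closure_ISet_subset_of_prefix {l a : List ℕ} (hl : l ≠ []) (h : l <+: a) :
    closure (ISet 𝓘 a) ⊆ closure (ISet 𝓘 l) := by
  obtain ⟨e, rfl⟩ := h
  rcases eq_or_ne e [] with rfl | he
  · rw [List.append_nil]
  · exact (closure_ISet_append_subset_JSet hreg hl he).trans sdiff_subset

lemma JSet_subset_of_prefix {l a : List ℕ} (hl : l ≠ []) (h : l <+: a) :
    JSet 𝓘 a ⊆ JSet 𝓘 l := by
  obtain ⟨e, rfl⟩ := h
  rcases eq_or_ne e [] with rfl | he
  · rw [List.append_nil]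
  · exact sdiff_subset.trans (closure_ISet_append_subset_JSet hreg hl he)

lemma mem_ISet_append_singleton_of_prefix {l m : List ℕ} (h : l <+: m) {x : K}
    (hx : x ∈ JSet 𝓘 m) {i : ℕ} (hi : x ∈ ⋃₀ 𝓘 i) : x ∈ ISet 𝓘 (l ++ [i]) := by
  rcases eq_or_ne l [] with rfl | hl
  · exact hi
  · rw [ISet_append_singleton 𝓘 hl]
    exact ⟨hi, JSet_subset_of_prefix hreg hl h hx⟩

end ISet

namespace List

lemma forall_mem_take_lt_of_getD_lt {l : List ℕ} {r i : ℕ} (h : ∀ s < r, l.getD s 0 < i) :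
    ∀ y ∈ l.take r, y < i := by
  intro y hy
  obtain ⟨s, hs, rfl⟩ := getElem_of_mem hy
  rw [length_take] at hs
  simpa only [getD_eq_getElem _ _ (lt_of_lt_of_le hs (min_le_right _ _)), getElem_take]
    using h s (lt_of_lt_of_le hs (min_le_left _ _))

lemma IsChain.append_singleton_of_forall_lt {l : List ℕ} {i : ℕ} (hl : l.IsChain (· < ·))
    (h : ∀ y ∈ l, y < i) : (l ++ [i]).IsChain (· < ·) :=
  hl.append (isChain_singleton i) fun x hx y hy => by
    rw [head?_singleton, Option.mem_some_iff] at hy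
    exact hy ▸ h x (mem_of_mem_getLast? hx)

lemma exists_branch_or_prefix_of_exists_le {l : List ℕ} {i : ℕ} (h : ∃ y ∈ l, i ≤ y) :
    (∃ r, r < l.length ∧ (∀ s < r, l.getD s 0 < i) ∧ i < l.getD r 0) ∨
      ∃ p, p ++ [i] <+: l := by
  induction l with
  | nil => simp at h
  | cons y t ih =>
    rcases lt_trichotomy i y with hlt | rfl | hgt
    · exact Or.inl ⟨0, by simp, by simp, by simpa⟩
    · exact Or.inr ⟨[], by simp⟩
    · have ht : ∃ z ∈ t, i ≤ z := by
        obtain ⟨z, hz, hiz⟩ := h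
        rcases mem_cons.mp hz with rfl | hz
        · omega
        · exact ⟨z, hz, hiz⟩
      rcases ih ht with ⟨r, hr, hs, hi⟩ | ⟨p, hp⟩
      · refine Or.inl ⟨r + 1, by simpa, fun s hs' => ?_, by simpa⟩
        cases s with
        | zero => simpa
        | succ s => simpa using hs s (by omega)
      · exact Or.inr ⟨y :: p, cons_prefix_cons.mpr ⟨rfl, hp⟩⟩

end List

section SLt

open List

lemma sLt_take_append_singleton {l : List ℕ} {r i : ℕ} (hr : r < l.length)
    (hi : i < l.getD r 0) : SLt (l.take r ++ [i]) l := by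
  have hlen : (l.take r).length = r := length_take_of_le hr.le
  refine Or.inl ⟨r, i, l.getD r 0, fun s hs => ?_, ?_, ?_, hi⟩
  · rw [getElem?_append_left (hlen.symm ▸ hs), getElem?_take_of_lt hs]
  · rw [getElem?_append_right hlen.le, hlen, Nat.sub_self, getElem?_singleton, if_pos rfl]
  · rw [getElem?_eq_getElem hr, getD_eq_getElem _ _ hr]

lemma sLt_append {l e : List ℕ} (he : e ≠ []) : SLt (l ++ e) l :=
  Or.inr ⟨prefix_append l e, by simpa using he.symm⟩

lemma SLt.exists_branch_or_extension {a l : List ℕ} (ha : a.IsChain (· < ·)) (h : SLt a l) :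
    (∃ r u, r < l.length ∧ (∀ s < r, l.getD s 0 < u) ∧ u < l.getD r 0 ∧
      l.take r ++ [u] <+: a) ∨ ∃ e, e ≠ [] ∧ a = l ++ e := by
  rcases h with ⟨r, u, v, hagree, hau, hlv, huv⟩ | ⟨⟨e, rfl⟩, hne⟩
  · obtain ⟨hra, rfl⟩ := List.getElem?_eq_some_iff.mp hau
    obtain ⟨hrl, rfl⟩ := List.getElem?_eq_some_iff.mp hlv
    have htake : a.take r = l.take r := ext_getElem? fun s => by
      rw [getElem?_take, getElem?_take]
      split_ifs with hs
      exacts [hagree s hs, rfl]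
    refine Or.inl ⟨r, a[r], hrl, fun s hs => ?_, by rwa [getD_eq_getElem _ _ hrl], ?_⟩
    · have hsa : s < a.length := hs.trans hra
      rw [getD_eq_getElem?_getD, ← hagree s hs, getElem?_eq_getElem hsa, Option.getD_some]
      exact pairwise_iff_getElem.mp (isChain_iff_pairwise.mp ha) s r hsa hra hs
    · have : a.take r ++ [a[r]] = a.take (r + 1) := by
        rw [take_add_one, getElem?_eq_getElem hra]
        rfl
      rw [← htake, this]
      exact take_prefix _ _
  · exact Or.inr ⟨e, by rintro rfl; simp at hne, rfl⟩

end SLt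

section Unions

variable {K : Type*} [TopologicalSpace K] (𝓘 : ℕ → Set (Set K))

def precUnion (l : List ℕ) : Set K :=
  ⋃₀ {S | ∃ a : List ℕ, SigmaMem a ∧ SLt a l ∧ S = closure (ISet 𝓘 a)}

/-- `leftBranchUnion 𝓘 j` and `extensionUnion 𝓘 j` are the sets `A₁` and `A₂`. -/
def leftBranchUnion (l : List ℕ) : Set K :=
  ⋃₀ {S | ∃ r i : ℕ, r < l.length ∧ (∀ s < r, l.getD s 0 < i) ∧
    i < l.getD r 0 ∧ S = closure (ISet 𝓘 (l.take r ++ [i]))}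

def extensionUnion (l : List ℕ) : Set K :=
  ⋃₀ {S | ∃ e : List ℕ, e ≠ [] ∧ (l ++ e).IsChain (· < ·) ∧ S = closure (ISet 𝓘 (l ++ e))}

variable {𝓘}

lemma closure_ISet_subset_precUnion {a l : List ℕ} (ha : SigmaMem a) (h : SLt a l) :
    closure (ISet 𝓘 a) ⊆ precUnion 𝓘 l :=
  subset_sUnion_of_mem ⟨a, ha, h, rfl⟩

lemma closure_ISet_subset_leftBranchUnion {l : List ℕ} {r i : ℕ} (hr : r < l.length)
    (hs : ∀ s < r, l.getD s 0 < i) (hi : i < l.getD r 0) :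
    closure (ISet 𝓘 (l.take r ++ [i])) ⊆ leftBranchUnion 𝓘 l :=
  subset_sUnion_of_mem ⟨r, i, hr, hs, hi, rfl⟩

lemma closure_ISet_subset_extensionUnion {l e : List ℕ} (he : e ≠ [])
    (hc : (l ++ e).IsChain (· < ·)) : closure (ISet 𝓘 (l ++ e)) ⊆ extensionUnion 𝓘 l :=
  subset_sUnion_of_mem ⟨e, he, hc, rfl⟩

lemma isClosed_leftBranchUnion (l : List ℕ) : IsClosed (leftBranchUnion 𝓘 l) := by
  have hfin : {S | ∃ r i : ℕ, r < l.length ∧ (∀ s < r, l.getD s 0 < i) ∧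
      i < l.getD r 0 ∧ S = closure (ISet 𝓘 (l.take r ++ [i]))}.Finite := by
    refine ((finite_Iio l.length).biUnion fun r _ =>
      (finite_Iio (l.getD r 0)).image fun i => closure (ISet 𝓘 (l.take r ++ [i]))).subset ?_
    rintro _ ⟨r, i, hr, -, hi, rfl⟩
    exact mem_biUnion hr (mem_image_of_mem _ hi)
  rw [leftBranchUnion, sUnion_eq_biUnion]
  refine hfin.isClosed_biUnion ?_
  rintro _ ⟨r, i, -, -, -, rfl⟩
  exact isClosed_closure

variable (hreg : ∀ i : ℕ, IsRegularIsolatedFamily (𝓘 i))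
include hreg

lemma precUnion_eq_leftBranchUnion_union_extensionUnion {l : List ℕ}
    (hl : l.IsChain (· < ·)) : precUnion 𝓘 l = leftBranchUnion 𝓘 l ∪ extensionUnion 𝓘 l := by
  refine Subset.antisymm ?_ (union_subset ?_ ?_)
  · rintro x ⟨_, ⟨a, ⟨-, ha⟩, hal, rfl⟩, hx⟩
    rcases SLt.exists_branch_or_extension ha hal with ⟨r, u, hr, hs, hu, hpre⟩ | ⟨e, he, rfl⟩
    · exact Or.inl (closure_ISet_subset_leftBranchUnion hr hs hu
        (closure_ISet_subset_of_prefix hreg (by simp) hpre hx))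
    · exact Or.inr (closure_ISet_subset_extensionUnion he ha hx)
  · rintro x ⟨_, ⟨r, i, hr, hs, hi, rfl⟩, hx⟩
    exact closure_ISet_subset_precUnion
      ⟨by simp, (hl.take r).append_singleton_of_forall_lt (List.forall_mem_take_lt_of_getD_lt hs)⟩
      (sLt_take_append_singleton hr hi) hx
  · rintro x ⟨_, ⟨e, he, hc, rfl⟩, hx⟩
    exact closure_ISet_subset_precUnion ⟨by simp [he], hc⟩ (sLt_append he) hx

lemma extensionUnion_subset_JSet {l : List ℕ} (hl : l ≠ []) :
    extensionUnion 𝓘 l ⊆ JSet 𝓘 l :=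
  sUnion_subset fun _ ⟨_, he, _, hS⟩ => hS ▸ closure_ISet_append_subset_JSet hreg hl he

lemma JSet_subset_leftBranchUnion_union_extensionUnion
    (hcover : ⋃₀ (⋃ i : ℕ, 𝓘 i) = Set.univ) {l : List ℕ} (hl : l.IsChain (· < ·)) :
    JSet 𝓘 l ⊆ leftBranchUnion 𝓘 l ∪ extensionUnion 𝓘 l := by
  intro x hx
  obtain ⟨i, hi⟩ : ∃ i, x ∈ ⋃₀ 𝓘 i := by
    simpa only [← mem_iUnion, ← sUnion_iUnion, hcover] using mem_univ x
  have hmem : ∀ p, p <+: l → x ∈ ISet 𝓘 (p ++ [i]) := fun p hp =>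
    mem_ISet_append_singleton_of_prefix hreg hp hx hi
  by_cases hlast : ∀ y ∈ l, y < i
  · exact Or.inr (closure_ISet_subset_extensionUnion (List.cons_ne_nil i [])
      (hl.append_singleton_of_forall_lt hlast) (subset_closure (hmem l (List.prefix_refl l))))
  push Not at hlast
  rcases List.exists_branch_or_prefix_of_exists_le hlast with ⟨r, hr, hs, hir⟩ | ⟨p, hp⟩
  · exact Or.inl (closure_ISet_subset_leftBranchUnion hr hs hir
      (subset_closure (hmem _ (List.take_prefix r l))))
  · exact absurd (hmem p ((List.prefix_append p [i]).trans hp))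
      (JSet_subset_of_prefix hreg (by simp) hp hx).2

end Unions

/-- Lemma 3.2: for `j = (j_0,…,j_l) ∈ Σ`, with
`A₁ = ⋃_{0 ≤ r ≤ l} ⋃_{j_{r-1} < i < j_r} closure I(j_0,…,j_{r-1},i)` and
`A₂ = ⋃_{k > l} ⋃_{j_l < i_{l+1} < ⋯ < i_k} closure I(j_0,…,j_l,i_{l+1},…,i_k)`,
we have `⋃_{i ≺ j} closure I(i) = A₁ ∪ A₂ = A₁ ∪ J(j)`; in particular
`⋃_{i ≺ j} closure I(i)` is closed. -/
theorem lemma_3_2 {K : Type*} [TopologicalSpace K] (𝓘 : ℕ → Set (Set K))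
    (hreg : ∀ i : ℕ, IsRegularIsolatedFamily (𝓘 i))
    (hcover : ⋃₀ (⋃ i : ℕ, 𝓘 i) = Set.univ)
    (jl : List ℕ) (hjl : SigmaMem jl) :
    let lhs : Set K :=
      ⋃₀ {S | ∃ a : List ℕ, SigmaMem a ∧ SLt a jl ∧ S = closure (ISet 𝓘 a)}
    let A1 : Set K :=
      ⋃₀ {S | ∃ r i : ℕ, r < jl.length ∧ (∀ s < r, jl.getD s 0 < i) ∧
        i < jl.getD r 0 ∧ S = closure (ISet 𝓘 (jl.take r ++ [i]))}
    let A2 : Set K :=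
      ⋃₀ {S | ∃ e : List ℕ, e ≠ [] ∧ (jl ++ e).Chain' (· < ·) ∧
        S = closure (ISet 𝓘 (jl ++ e))}
    lhs = A1 ∪ A2 ∧ lhs = A1 ∪ JSet 𝓘 jl ∧ IsClosed lhs := by
  intro lhs A1 A2
  obtain ⟨hne, hchain⟩ := hjl
  have hlhs : lhs = A1 ∪ A2 := precUnion_eq_leftBranchUnion_union_extensionUnion hreg hchain
  have hJ : A1 ∪ A2 = A1 ∪ JSet 𝓘 jl :=
    Subset.antisymm (union_subset_union_right _ (extensionUnion_subset_JSet hreg hne))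
      (union_subset subset_union_left
        (JSet_subset_leftBranchUnion_union_extensionUnion hreg hcover hchain))
  refine ⟨hlhs, hlhs.trans hJ, ?_⟩
  rw [hlhs, hJ]
  exact (isClosed_leftBranchUnion jl).union (isClosed_JSet hreg jl)
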